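/- For n×n complex matrices A, the matrix q-exponential E_q(A^{p+1}x; Aθ) = e^{A^{p+1}x} Σ_{k=0}^p (Aθ)^k/[k]_q! satisfies D E_q(A^{p+1}x; Aθ) = A·E_q(A^{p+1}x; Aθ), and the order of the factors is irrelevant: e^{A^{p+1}x} Σ_{k=0}^p A^kθ^k/[k]_q! = (Σ_{k=0}^p A^kθ^k/[k]_q!) e^{A^{p+1}x}. -/

import Mathlib

open Complex Finset

/-- The `q`-integer `[n]_q = 1 + q + ⋯ + q^(n-1)`. -/
noncomputable def qint (q : ℂ) (n : ℕ) : ℂ := ∑ i ∈ Finset.range n, q ^ i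

/-- The `q`-factorial `[n]_q! = [1]_q [2]_q ⋯ [n]_q`, with `[0]_q! = 1`. -/
noncomputable def qfact (q : ℂ) (n : ℕ) : ℂ := ∏ i ∈ Finset.range n, qint q (i + 1)

/-! Dividing the recursion `[k+1]_q! = [k]_q! [k+1]_q` by `[k+1]_q` gives the components
`k < p`; this is legitimate because `q` is a primitive `(p+1)`-th root of unity, so
`[m]_q (q - 1) = q^m - 1 ≠ 0` for `0 < m < p + 1`. The top component is
`d/dx e^{A^{p+1}x} = A^{p+1} e^{A^{p+1}x}`, read off entrywise, and `A^k` commutes with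
`e^{A^{p+1}x}` since it commutes with `A^{p+1}`. -/

attribute [local instance] Matrix.linftyOpNormedAddCommGroup Matrix.linftyOpNormedRing
  Matrix.linftyOpNormedAlgebra

theorem qfact_succ (q : ℂ) (k : ℕ) : qfact q (k + 1) = qfact q k * qint q (k + 1) :=
  prod_range_succ _ k

theorem qint_ne_zero_of_isPrimitiveRoot {q : ℂ} {N m : ℕ} (hq : IsPrimitiveRoot q N)
    (hm₀ : m ≠ 0) (hmN : m < N) : qint q m ≠ 0 := by
  intro h
  have : q ^ m - 1 = 0 := by rw [← geom_sum_mul, ← qint, h, zero_mul]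
  exact hq.pow_ne_one_of_pos_of_lt hm₀ hmN (sub_eq_zero.1 this)

theorem isPrimitiveRoot_exp_div_succ (p : ℕ) :
    IsPrimitiveRoot (exp (2 * Real.pi * I / (p + 1))) (p + 1) := by
  exact_mod_cast Complex.isPrimitiveRoot_exp (p + 1) p.succ_ne_zero

theorem qint_succ_smul_qfact_inv_smul {R : Type*} [Ring R] [Algebra ℂ R] {q : ℂ} {k : ℕ}
    (hq : qint q (k + 1) ≠ 0) (A M : R) :
    qint q (k + 1) • (qfact q (k + 1))⁻¹ • (A ^ (k + 1) * M)
      = A * (qfact q k)⁻¹ • (A ^ k * M) := by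
  rw [qfact_succ, smul_smul, mul_inv, mul_left_comm, mul_inv_cancel₀ hq, mul_one,
    mul_smul_comm, pow_succ', mul_assoc]

/- `HasDerivAt` only sees the topology, and the `L∞` operator norm induces the product topology
definitionally, so the product-space lemma applies as is. -/
theorem HasDerivAt.matrix_apply {𝕜 m n α : Type*} [NontriviallyNormedField 𝕜] [Fintype m]
    [Fintype n] [NormedAddCommGroup α] [NormedSpace 𝕜 α] {f : 𝕜 → Matrix m n α}
    {f' : Matrix m n α} {x : 𝕜} (hf : HasDerivAt f f' x) (i : m) (j : n) :
    HasDerivAt (fun t => f t i j) (f' i j) x :=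
  hasDerivAt_pi.1 (hasDerivAt_pi.1 hf i) j

theorem matrix_qexp_derivative_general (p : ℕ) (q : ℂ)
    (hq : q = Complex.exp (2 * Real.pi * Complex.I / (p + 1)))
    (n : ℕ) (A : Matrix (Fin n) (Fin n) ℂ)
    (W : ℕ → ℝ → Matrix (Fin n) (Fin n) ℂ)
    (hW : ∀ k ≤ p, ∀ x : ℝ,
      W k x = (qfact q k)⁻¹ • (A ^ k * NormedSpace.exp (x • A ^ (p + 1)))) :
    (∀ k, k < p → ∀ x : ℝ, qint q (k + 1) • W (k + 1) x = A * W k x) ∧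
    (∀ x : ℝ, (qfact q p)⁻¹ •
        Matrix.of (fun i j => deriv (fun t : ℝ => W 0 t i j) x) = A * W p x) ∧
    (∀ k ≤ p, ∀ x : ℝ,
      A ^ k * NormedSpace.exp (x • A ^ (p + 1))
        = NormedSpace.exp (x • A ^ (p + 1)) * A ^ k) := by
  have hq' : IsPrimitiveRoot q (p + 1) := hq ▸ isPrimitiveRoot_exp_div_succ p
  refine ⟨fun k hk x => ?_, fun x => ?_, fun k _ x => ?_⟩
  · rw [hW (k + 1) hk x, hW k hk.le x]
    exact qint_succ_smul_qfact_inv_smul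
      (qint_ne_zero_of_isPrimitiveRoot hq' k.succ_ne_zero (by omega)) _ _
  · have hW₀ : W 0 = fun t : ℝ => NormedSpace.exp (t • A ^ (p + 1)) := by
      funext t
      simp [hW 0 p.zero_le t, qfact]
    have hderiv : Matrix.of (fun i j => deriv (fun t : ℝ => W 0 t i j) x)
        = A ^ (p + 1) * NormedSpace.exp (x • A ^ (p + 1)) := by
      ext i j
      rw [Matrix.of_apply, hW₀]
      exact ((hasDerivAt_exp_smul_const' (A ^ (p + 1)) x).matrix_apply i j).deriv
    rw [hderiv, hW p le_rfl x, mul_smul_comm, pow_succ', mul_assoc]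
  · exact (((Commute.refl A).pow_pow k (p + 1)).smul_right x).exp_right.eq

/-- The matrix `q`-exponential `E_q(A^(p+1)x; Aθ) = e^(A^(p+1)x) Σ_{k=0}^p (Aθ)^k/[k]_q!`
(a matrix-valued parasuperfunction with components `W_k(x) = (A^k/[k]_q!) e^(A^(p+1)x)`)
satisfies `D E_q(A^(p+1)x; Aθ) = A · E_q(A^(p+1)x; Aθ)`, i.e. `[k+1]_q W_{k+1} = A W_k`
for `k < p` and `(1/[p]_q!) W_0' = A W_p`; moreover the order of the factors is
irrelevant: `e^(A^(p+1)x) A^k = A^k e^(A^(p+1)x)`. -/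
theorem matrix_qexp_derivative (p : ℕ) (hp : 1 ≤ p) (q : ℂ)
    (hq : q = Complex.exp (2 * Real.pi * Complex.I / (p + 1)))
    (n : ℕ) (A : Matrix (Fin n) (Fin n) ℂ)
    (W : ℕ → ℝ → Matrix (Fin n) (Fin n) ℂ)
    (hW : ∀ k ≤ p, ∀ x : ℝ,
      W k x = (qfact q k)⁻¹ • (A ^ k * NormedSpace.exp (x • A ^ (p + 1)))) :
    (∀ k, k < p → ∀ x : ℝ, qint q (k + 1) • W (k + 1) x = A * W k x) ∧
    (∀ x : ℝ, (qfact q p)⁻¹ •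
        Matrix.of (fun i j => deriv (fun t : ℝ => W 0 t i j) x) = A * W p x) ∧
    (∀ k ≤ p, ∀ x : ℝ,
      A ^ k * NormedSpace.exp (x • A ^ (p + 1))
        = NormedSpace.exp (x • A ^ (p + 1)) * A ^ k) :=
  matrix_qexp_derivative_general p q hq n A W hW
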